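/- arXiv:1109.2964 — 2 statements merged into one kernel-verified Lean document; each statement's English description precedes it below -/
import Mathlib

section
/- Let Q(L,x) = Γ(L,x)/Γ(L) denote the upper regularized gamma function, where Γ(L,x) is the upper incomplete gamma function. For a fixed real q > 0 and positive integers L, lim_{L→∞} Q(L, qL) = 0 if q > 1 and lim_{L→∞} Q(L, qL) = 1 if q < 1. -/
open MeasureTheory Filter

/-- Upper incomplete gamma function `Γ(L, x) = ∫_x^∞ t^(L-1) e^(-t) dt` for positive integer `L`. -/
noncomputable def uGamma (L : ℕ) (x : ℝ) : ℝ :=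
  ∫ t in Set.Ioi x, t ^ (L - 1) * Real.exp (-t)


open Finset

lemma S_hasDeriv (L : ℕ) (t : ℝ) :
    HasDerivAt (fun t : ℝ => -(Real.exp (-t) * ∑ k ∈ range (L + 1), (((L.factorial) : ℝ) / (k.factorial)) * t ^ k))
      (t ^ L * Real.exp (-t)) t := by
  have hS : HasDerivAt (fun t : ℝ => ∑ k ∈ range (L + 1), (((L.factorial) : ℝ) / (k.factorial)) * t ^ k)
      (∑ k ∈ range (L + 1), (((L.factorial) : ℝ) / (k.factorial)) * (k * t ^ (k - 1))) t := by
    apply HasDerivAt.fun_sum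
    intro k _
    exact (hasDerivAt_pow k t).const_mul _
  have hE : HasDerivAt (fun t : ℝ => Real.exp (-t)) (-Real.exp (-t)) t := by
    convert (hasDerivAt_neg t).exp using 1; ring
  have h := ((hE.mul hS).neg)
  have key : ∑ k ∈ range (L + 1), (((L.factorial) : ℝ) / (k.factorial)) * (k * t ^ (k - 1))
      = ∑ k ∈ range L, (((L.factorial) : ℝ) / (k.factorial)) * t ^ k := by
    rw [Finset.sum_range_succ']
    simp only [Nat.cast_zero, zero_mul, mul_zero, add_zero]
    apply Finset.sum_congr rfl
    intro k _
    have hk : ((k.factorial) : ℝ) ≠ 0 := Nat.cast_ne_zero.2 k.factorial_ne_zero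
    have hfs : (((k + 1).factorial : ℝ)) = (k + 1) * (k.factorial) := by
      push_cast [Nat.factorial_succ]; ring
    rw [Nat.add_sub_cancel, hfs]
    have hk1 : ((k : ℝ) + 1) ≠ 0 := by positivity
    push_cast
    field_simp
  rw [key] at h
  convert h using 1 <;> try rfl
  have split : ∑ k ∈ range (L + 1), (((L.factorial) : ℝ) / (k.factorial)) * t ^ k
      = (∑ k ∈ range L, (((L.factorial) : ℝ) / (k.factorial)) * t ^ k) + t ^ L := by
    rw [Finset.sum_range_succ, div_self (Nat.cast_ne_zero.2 L.factorial_ne_zero), one_mul]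
  rw [split]
  ring

lemma uGamma_succ_eq (L : ℕ) (x : ℝ) (hx : 0 ≤ x) :
    uGamma (L + 1) x = Real.exp (-x) * ∑ k ∈ range (L + 1), (((L.factorial) : ℝ) / (k.factorial)) * x ^ k := by
  have hderiv : ∀ t ∈ Set.Ici x, HasDerivAt
      (fun t : ℝ => -(Real.exp (-t) * ∑ k ∈ range (L + 1), (((L.factorial) : ℝ) / (k.factorial)) * t ^ k))
      (t ^ L * Real.exp (-t)) t := fun t _ => S_hasDeriv L t
  have hpos : ∀ t ∈ Set.Ioi x, 0 ≤ t ^ L * Real.exp (-t) := by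
    intro t ht
    have : (0:ℝ) ≤ t := le_trans hx (le_of_lt ht)
    positivity
  have hlim : Tendsto
      (fun t : ℝ => -(Real.exp (-t) * ∑ k ∈ range (L + 1), (((L.factorial) : ℝ) / (k.factorial)) * t ^ k))
      atTop (nhds 0) := by
    have : ∀ t : ℝ, -(Real.exp (-t) * ∑ k ∈ range (L + 1), (((L.factorial) : ℝ) / (k.factorial)) * t ^ k)
        = ∑ k ∈ range (L + 1), -((((L.factorial) : ℝ) / (k.factorial)) * (t ^ k * Real.exp (-t))) := by
      intro t
      rw [Finset.mul_sum, ← Finset.sum_neg_distrib]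
      apply Finset.sum_congr rfl
      intro k _; ring
    simp only [this]
    have h0 : (0:ℝ) = ∑ k ∈ range (L + 1), (0:ℝ) := by simp
    rw [h0]
    apply tendsto_finset_sum
    intro k _
    have := (Real.tendsto_pow_mul_exp_neg_atTop_nhds_zero k).const_mul (((L.factorial) : ℝ) / (k.factorial))
    simpa using this.neg
  have := integral_Ioi_of_hasDerivAt_of_nonneg' hderiv hpos hlim
  rw [uGamma]
  simp only [Nat.add_sub_cancel]
  rw [this]
  simp

lemma uGamma_succ_zero (L : ℕ) : uGamma (L + 1) 0 = (L.factorial : ℝ) := by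
  rw [uGamma_succ_eq L 0 le_rfl]
  rw [Finset.sum_eq_single 0]
  · simp
  · intro k _ hk
    simp [zero_pow hk]
  · simp

lemma uGamma_ratio (L : ℕ) (x : ℝ) (hx : 0 ≤ x) :
    uGamma (L + 1) x / uGamma (L + 1) 0
      = Real.exp (-x) * ∑ k ∈ range (L + 1), x ^ k / (k.factorial) := by
  rw [uGamma_succ_eq L x hx, uGamma_succ_zero, mul_div_assoc, Finset.sum_div]
  congr 1
  apply Finset.sum_congr rfl
  intro k _
  have hL : ((L.factorial : ℝ)) ≠ 0 := Nat.cast_ne_zero.2 L.factorial_ne_zero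
  have hk : ((k.factorial : ℝ)) ≠ 0 := Nat.cast_ne_zero.2 k.factorial_ne_zero
  field_simp

/-- `m^m ≤ e^m · m!` -/
lemma pow_self_le (m : ℕ) : (m : ℝ) ^ m ≤ Real.exp m * (m.factorial) := by
  have h1 : ((m:ℝ)) ^ m / (m.factorial) ≤ Real.exp m := by
    calc ((m:ℝ)) ^ m / (m.factorial)
        ≤ ∑ i ∈ range (m + 1), (m:ℝ) ^ i / (i.factorial) := by
          apply Finset.single_le_sum (f := fun i : ℕ => (m:ℝ) ^ i / (i.factorial : ℝ))
          · intro i _; positivity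
          · exact Finset.self_mem_range_succ m
      _ ≤ Real.exp m := Real.sum_le_exp_of_nonneg (by positivity) _
  have hm : (0:ℝ) < (m.factorial) := by exact_mod_cast m.factorial_pos
  calc ((m:ℝ)) ^ m = ((m:ℝ)) ^ m / (m.factorial) * (m.factorial) := by field_simp
    _ ≤ Real.exp m * (m.factorial) := by
        apply mul_le_mul_of_nonneg_right h1 hm.le

lemma c_bound (q : ℝ) (hq : 0 < q) (m : ℕ) :
    Real.exp (-(q * m)) * ((q * m) ^ m / (m.factorial)) ≤ (q * Real.exp (1 - q)) ^ m := by
  have hm : (0:ℝ) < (m.factorial) := by exact_mod_cast m.factorial_pos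
  have h1 : ((q * m) ^ m : ℝ) ≤ q ^ m * (Real.exp m * (m.factorial)) := by
    rw [mul_pow]
    exact mul_le_mul_of_nonneg_left (pow_self_le m) (by positivity)
  calc Real.exp (-(q * m)) * ((q * m) ^ m / (m.factorial))
      ≤ Real.exp (-(q * m)) * (q ^ m * (Real.exp m * (m.factorial)) / (m.factorial)) := by
        gcongr
    _ = q ^ m * (Real.exp (-(q * m)) * Real.exp m) := by field_simp
    _ = (q * Real.exp (1 - q)) ^ m := by
        rw [← Real.exp_add, mul_pow, ← Real.exp_nat_mul]
        ring_nf

lemma r_lt_one (q : ℝ) (hq : 0 < q) (hne : q ≠ 1) : q * Real.exp (1 - q) < 1 := by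
  have hlog := Real.log_lt_sub_one_of_pos hq hne
  have : Real.log (q * Real.exp (1 - q)) < 0 := by
    rw [Real.log_mul (ne_of_gt hq) (Real.exp_ne_zero _), Real.log_exp]
    linarith
  have hpos : 0 < q * Real.exp (1 - q) := by positivity
  calc q * Real.exp (1 - q) = Real.exp (Real.log (q * Real.exp (1 - q))) := (Real.exp_log hpos).symm
    _ < Real.exp 0 := Real.exp_lt_exp.2 this
    _ = 1 := Real.exp_zero

lemma geom_sum_le_inv (r : ℝ) (h0 : 0 ≤ r) (h1 : r < 1) (m : ℕ) :
    ∑ j ∈ range m, r ^ j ≤ 1 / (1 - r) := by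
  rw [geom_sum_eq (ne_of_lt h1)]
  have heq : (r ^ m - 1) / (r - 1) = (1 - r ^ m) / (1 - r) := by
    rw [← neg_div_neg_eq]; ring_nf
  rw [heq]
  have : 0 ≤ r ^ m := by positivity
  gcongr
  · linarith

lemma term_mono (q : ℝ) (hq : 1 < q) (n : ℕ) :
    ∀ j k, k + j = n →
      (q * (n + 1)) ^ k / (k.factorial : ℝ) * q ^ j ≤ (q * (n + 1)) ^ n / (n.factorial : ℝ) := by
  intro j
  induction j with
  | zero => intro k hk; simp [← hk]
  | succ j ih =>
    intro k hk
    have hk1 : (k + 1) + j = n := by omega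
    have step : (q * (n + 1)) ^ k / (k.factorial : ℝ) * q
        ≤ (q * (n + 1)) ^ (k + 1) / ((k + 1).factorial : ℝ) := by
      have hkf : (0:ℝ) < (k.factorial : ℝ) := by exact_mod_cast k.factorial_pos
      have hfs : (((k + 1).factorial : ℝ)) = (k + 1) * (k.factorial : ℝ) := by
        push_cast [Nat.factorial_succ]; ring
      rw [pow_succ, hfs]
      rw [div_mul_eq_mul_div, div_le_div_iff₀ (by positivity) (by positivity)]
      have hx : (0:ℝ) ≤ (q * (n + 1)) ^ k := by positivity
      have hkn : (k : ℝ) + 1 ≤ (n : ℝ) + 1 := by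
        have hkn' : (k : ℝ) ≤ (n : ℝ) := Nat.cast_le.mpr (by omega)
        linarith
      have hq0 : (0:ℝ) < q := lt_trans zero_lt_one hq
      calc (q * ((n:ℝ) + 1)) ^ k * q * (((k:ℝ) + 1) * (k.factorial : ℝ))
          = ((q * ((n:ℝ) + 1)) ^ k * (k.factorial : ℝ)) * (q * ((k:ℝ) + 1)) := by ring
        _ ≤ ((q * ((n:ℝ) + 1)) ^ k * (k.factorial : ℝ)) * (q * ((n:ℝ) + 1)) := by
            gcongr
        _ = (q * ((n:ℝ) + 1)) ^ k * (q * ((n:ℝ) + 1)) * (k.factorial : ℝ) := by ring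
    calc (q * (n + 1)) ^ k / (k.factorial : ℝ) * q ^ (j + 1)
        = ((q * (n + 1)) ^ k / (k.factorial : ℝ) * q) * q ^ j := by ring
      _ ≤ (q * (n + 1)) ^ (k + 1) / ((k + 1).factorial : ℝ) * q ^ j := by
          apply mul_le_mul_of_nonneg_right step (by positivity)
      _ ≤ _ := ih (k + 1) hk1

lemma sum_bound_gt (q : ℝ) (hq : 1 < q) (n : ℕ) :
    ∑ k ∈ range (n + 1), (q * (n + 1)) ^ k / (k.factorial : ℝ)
      ≤ (q * (n + 1)) ^ n / (n.factorial : ℝ) * (q / (q - 1)) := by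
  have hq0 : (0:ℝ) < q := lt_trans zero_lt_one hq
  have key : ∀ k ∈ range (n + 1), (q * (n + 1)) ^ k / (k.factorial : ℝ)
      ≤ (q * (n + 1)) ^ n / (n.factorial : ℝ) * (1 / q) ^ (n - k) := by
    intro k hk
    have hkn : k ≤ n := Nat.lt_succ_iff.1 (Finset.mem_range.1 hk)
    have := term_mono q hq n (n - k) k (by omega)
    have hqj : (0:ℝ) < q ^ (n - k) := by positivity
    rw [div_pow, one_pow, mul_one_div, le_div_iff₀ hqj]
    exact term_mono q hq n (n - k) k (by omega)
  calc ∑ k ∈ range (n + 1), (q * (n + 1)) ^ k / (k.factorial : ℝ)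
      ≤ ∑ k ∈ range (n + 1), (q * (n + 1)) ^ n / (n.factorial : ℝ) * (1 / q) ^ (n - k) :=
        Finset.sum_le_sum key
    _ = (q * (n + 1)) ^ n / (n.factorial : ℝ) * ∑ k ∈ range (n + 1), (1 / q) ^ (n - k) := by
        rw [Finset.mul_sum]
    _ ≤ (q * (n + 1)) ^ n / (n.factorial : ℝ) * (q / (q - 1)) := by
        apply mul_le_mul_of_nonneg_left _ (by positivity)
        have hrefl : ∑ k ∈ range (n + 1), (1 / q) ^ (n - k)
            = ∑ j ∈ range (n + 1), (1 / q) ^ j := by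
          have := Finset.sum_range_reflect (fun j => (1 / q) ^ j) (n + 1)
          simpa using this
        rw [hrefl]
        have h1 : (1:ℝ) / q < 1 := by rw [div_lt_one hq0]; exact hq
        have := geom_sum_le_inv (1 / q) (by positivity) h1 (n + 1)
        calc ∑ j ∈ range (n + 1), (1 / q) ^ j ≤ 1 / (1 - 1 / q) := this
          _ = q / (q - 1) := by field_simp

lemma P_bound_gt (q : ℝ) (hq : 1 < q) (n : ℕ) :
    Real.exp (-(q * (n + 1))) * ∑ k ∈ range (n + 1), (q * (n + 1)) ^ k / (k.factorial : ℝ)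
      ≤ (q * Real.exp (1 - q)) ^ (n + 1) / (q - 1) := by
  have hq0 : (0:ℝ) < q := lt_trans zero_lt_one hq
  have hnf : (0:ℝ) < (n.factorial : ℝ) := by exact_mod_cast n.factorial_pos
  have step1 : Real.exp (-(q * (n + 1))) * ∑ k ∈ range (n + 1), (q * (n + 1)) ^ k / (k.factorial : ℝ)
      ≤ Real.exp (-(q * (n + 1))) * ((q * (n + 1)) ^ n / (n.factorial : ℝ) * (q / (q - 1))) :=
    mul_le_mul_of_nonneg_left (sum_bound_gt q hq n) (Real.exp_pos _).le
  have step2 : Real.exp (-(q * (n + 1))) * ((q * (n + 1)) ^ n / (n.factorial : ℝ) * (q / (q - 1)))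
      = Real.exp (-(q * ((n:ℕ)+1 : ℕ))) * ((q * ((n:ℕ)+1 : ℕ)) ^ ((n:ℕ)+1) / (((n:ℕ)+1).factorial : ℝ)) * (1 / (q - 1)) := by
    have hfs : ((((n:ℕ)+1).factorial : ℝ)) = ((n:ℝ) + 1) * (n.factorial : ℝ) := by
      push_cast [Nat.factorial_succ]; ring
    have h1 : ((n:ℝ) + 1) ≠ 0 := by positivity
    have hnf' : (n.factorial : ℝ) ≠ 0 := ne_of_gt hnf
    have hxx : (q * ((n:ℝ) + 1)) ^ (n + 1) / ((((n:ℕ)+1).factorial : ℝ))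
        = (q * ((n:ℝ) + 1)) ^ n / (n.factorial : ℝ) * q := by
      rw [hfs, pow_succ]; field_simp
    push_cast
    rw [hxx]; ring
  have step3 := c_bound q hq0 (n + 1)
  calc Real.exp (-(q * (n + 1))) * ∑ k ∈ range (n + 1), (q * (n + 1)) ^ k / (k.factorial : ℝ)
      ≤ Real.exp (-(q * ((n:ℕ)+1 : ℕ))) * ((q * ((n:ℕ)+1 : ℕ)) ^ ((n:ℕ)+1) / (((n:ℕ)+1).factorial : ℝ)) * (1 / (q - 1)) := by
        rw [← step2]; exact step1
    _ ≤ (q * Real.exp (1 - q)) ^ (n + 1) * (1 / (q - 1)) := by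
        have hpos : (0:ℝ) ≤ 1 / (q - 1) := by
          apply le_of_lt; rw [one_div]; exact inv_pos.2 (by linarith)
        exact mul_le_mul_of_nonneg_right step3 hpos
    _ = (q * Real.exp (1 - q)) ^ (n + 1) / (q - 1) := by ring

lemma tail_term (q : ℝ) (hq0 : 0 < q) (hq1 : q < 1) (n : ℕ) : ∀ k : ℕ,
    (q * (n + 1)) ^ (k + (n + 1)) / (((k + (n + 1)).factorial : ℝ))
      ≤ (q * (n + 1)) ^ (n + 1) / (((n + 1).factorial : ℝ)) * q ^ k := by
  intro k
  induction k with
  | zero => simp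
  | succ k ih =>
    have hfs : (((k + (n + 1) + 1).factorial : ℝ)) = ((k:ℝ) + (n:ℝ) + 2) * ((k + (n + 1)).factorial : ℝ) := by
      push_cast [Nat.factorial_succ]; ring
    have hkf : (0:ℝ) < ((k + (n + 1)).factorial : ℝ) := by exact_mod_cast (k + (n+1)).factorial_pos
    have hx0 : (0:ℝ) < q * ((n:ℝ) + 1) := by positivity
    have step : (q * ((n:ℝ) + 1)) ^ (k + 1 + (n + 1)) / (((k + 1 + (n + 1)).factorial : ℝ))
        ≤ ((q * ((n:ℝ) + 1)) ^ (k + (n + 1)) / (((k + (n + 1)).factorial : ℝ))) * q := by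
      have hexp : k + 1 + (n + 1) = (k + (n + 1)) + 1 := by omega
      rw [hexp, pow_succ, hfs]
      rw [div_le_iff₀ (by positivity)]
      have hle : q * ((n:ℝ) + 1) ≤ q * ((k:ℝ) + (n:ℝ) + 2) := by
        apply mul_le_mul_of_nonneg_left _ hq0.le
        have : (0:ℝ) ≤ (k:ℝ) := Nat.cast_nonneg k
        linarith
      calc (q * ((n:ℝ) + 1)) ^ (k + (n + 1)) * (q * ((n:ℝ) + 1))
          ≤ (q * ((n:ℝ) + 1)) ^ (k + (n + 1)) * (q * ((k:ℝ) + (n:ℝ) + 2)) := by gcongr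
        _ = (q * ((n:ℝ) + 1)) ^ (k + (n + 1)) / ((k + (n + 1)).factorial : ℝ) * q * (((k:ℝ) + (n:ℝ) + 2) * ((k + (n + 1)).factorial : ℝ)) := by
            field_simp
    calc (q * ((n:ℝ) + 1)) ^ (k + 1 + (n + 1)) / (((k + 1 + (n + 1)).factorial : ℝ))
        ≤ ((q * ((n:ℝ) + 1)) ^ (k + (n + 1)) / (((k + (n + 1)).factorial : ℝ))) * q := step
      _ ≤ ((q * ((n:ℝ) + 1)) ^ (n + 1) / (((n + 1).factorial : ℝ)) * q ^ k) * q := by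
          apply mul_le_mul_of_nonneg_right ih hq0.le
      _ = (q * ((n:ℝ) + 1)) ^ (n + 1) / (((n + 1).factorial : ℝ)) * q ^ (k + 1) := by ring

lemma P_bound_lt (q : ℝ) (hq0 : 0 < q) (hq1 : q < 1) (n : ℕ) :
    |Real.exp (-(q * (n + 1))) * ∑ k ∈ range (n + 1), (q * (n + 1)) ^ k / (k.factorial : ℝ) - 1|
      ≤ (q * Real.exp (1 - q)) ^ (n + 1) / (1 - q) := by
  set x : ℝ := q * (n + 1) with hxdef
  have hx0 : (0:ℝ) ≤ x := by positivity
  have hs := Real.summable_pow_div_factorial x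
  have hsum : ∑ k ∈ range (n + 1), x ^ k / (k.factorial : ℝ)
        + ∑' k : ℕ, x ^ (k + (n + 1)) / ((k + (n + 1)).factorial : ℝ)
      = Real.exp x := by
    rw [Real.exp_eq_exp_ℝ, NormedSpace.exp_eq_tsum_div]
    exact hs.sum_add_tsum_nat_add (n + 1)
  set T : ℝ := ∑' k : ℕ, x ^ (k + (n + 1)) / ((k + (n + 1)).factorial : ℝ) with hT
  have hT0 : 0 ≤ T := tsum_nonneg fun k => by positivity
  have hTle : T ≤ x ^ (n + 1) / (((n + 1).factorial : ℝ)) * (1 - q)⁻¹ := by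
    have hsum2 : Summable (fun k : ℕ => x ^ (n + 1) / (((n + 1).factorial : ℝ)) * q ^ k) :=
      (summable_geometric_of_lt_one hq0.le hq1).mul_left _
    have hle := Summable.tsum_le_tsum (tail_term q hq0 hq1 n) ((summable_nat_add_iff (f := fun k : ℕ => x ^ k / (k.factorial : ℝ)) (n+1)).2 hs) hsum2
    calc T ≤ ∑' k : ℕ, x ^ (n + 1) / (((n + 1).factorial : ℝ)) * q ^ k := hle
      _ = x ^ (n + 1) / (((n + 1).factorial : ℝ)) * (1 - q)⁻¹ := by
          rw [tsum_mul_left, tsum_geometric_of_lt_one hq0.le hq1]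
  have key : Real.exp (-x) * ∑ k ∈ range (n + 1), x ^ k / (k.factorial : ℝ) - 1
      = -(Real.exp (-x) * T) := by
    have h1 : Real.exp (-x) * Real.exp x = 1 := by rw [← Real.exp_add]; simp
    have h2 : ∑ k ∈ range (n + 1), x ^ k / (k.factorial : ℝ) = Real.exp x - T := by
      linarith [hsum]
    rw [h2]; nlinarith [h1]
  rw [key, abs_neg, abs_of_nonneg (by positivity)]
  calc Real.exp (-x) * T ≤ Real.exp (-x) * (x ^ (n + 1) / (((n + 1).factorial : ℝ)) * (1 - q)⁻¹) :=
        mul_le_mul_of_nonneg_left hTle (Real.exp_pos _).le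
    _ = Real.exp (-(q * ((n:ℕ)+1 : ℕ))) * ((q * ((n:ℕ)+1 : ℕ)) ^ (n+1) / (((n:ℕ)+1).factorial : ℝ)) * (1 - q)⁻¹ := by
        push_cast; rw [hxdef]; ring
    _ ≤ (q * Real.exp (1 - q)) ^ (n + 1) * (1 - q)⁻¹ := by
        exact mul_le_mul_of_nonneg_right (c_bound q hq0 (n + 1)) (le_of_lt (inv_pos.2 (by linarith)))
    _ = (q * Real.exp (1 - q)) ^ (n + 1) / (1 - q) := by ring

theorem regularized_gamma_limit (q : ℝ) (hq : 0 < q) :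
    (q > 1 → Tendsto (fun L : ℕ => uGamma L (q * L) / uGamma L 0) atTop (nhds 0)) ∧
    (q < 1 → Tendsto (fun L : ℕ => uGamma L (q * L) / uGamma L 0) atTop (nhds 1)) := by
  have heq : ∀ n : ℕ, uGamma (n + 1) (q * ((n:ℝ) + 1)) / uGamma (n + 1) 0
      = Real.exp (-(q * ((n:ℝ) + 1))) * ∑ k ∈ range (n + 1), (q * ((n:ℝ) + 1)) ^ k / (k.factorial : ℝ) := by
    intro n
    rw [uGamma_ratio n (q * ((n:ℝ) + 1)) (by positivity)]
  have hgeom : ∀ c : ℝ, (q ≠ 1) →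
      Tendsto (fun n : ℕ => (q * Real.exp (1 - q)) ^ (n + 1) / c) atTop (nhds 0) := by
    intro c hne
    have h0 : (0:ℝ) ≤ q * Real.exp (1 - q) := by positivity
    have h1 := r_lt_one q hq hne
    have := (tendsto_pow_atTop_nhds_zero_of_lt_one h0 h1).comp (tendsto_add_atTop_nat 1)
    have h2 := this.div_const c
    simpa using h2
  constructor
  · intro hq1
    rw [← Filter.tendsto_add_atTop_iff_nat 1]
    apply squeeze_zero (g := fun n : ℕ => (q * Real.exp (1 - q)) ^ (n + 1) / (q - 1))
    · intro n
      push_cast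
      rw [heq n]
      positivity
    · intro n
      have h := P_bound_gt q hq1 n
      push_cast
      rw [heq n]
      convert h using 3 <;> push_cast <;> ring
    · exact hgeom _ (ne_of_gt hq1)
  · intro hq1
    rw [← Filter.tendsto_add_atTop_iff_nat 1]
    rw [tendsto_iff_dist_tendsto_zero]
    apply squeeze_zero (g := fun n : ℕ => (q * Real.exp (1 - q)) ^ (n + 1) / (1 - q))
    · intro n; exact dist_nonneg
    · intro n
      have h := P_bound_lt q hq hq1 n
      simp only [Real.dist_eq]
      push_cast
      rw [heq n]
      convert h using 4 <;> push_cast <;> ring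
    · exact hgeom _ (ne_of_lt hq1)
end

section
/- Let ψ_c : (0,∞) → (0,∞) be a continuous, strictly increasing function with ψ_c(γ) → 0 as γ → 0⁺ and ψ_c(γ) → ∞ as γ → ∞, and let q > 0. Define F_L(γ) = 1 − Γ(L, qL·ψ_c(γ))/Γ(L). Then for every γ > 0, lim_{L→∞} F_L(γ) = 0 if ψ_c(γ) < 1/q and lim_{L→∞} F_L(γ) = 1 if ψ_c(γ) > 1/q; hence F_L converges pointwise (at continuity points) to the CDF of the constant ψ_c^{−1}(1/q). -/
/-!
Both tails of the Gamma(L, 1) distribution at `a L`, `a ≠ 1`, are bounded by Chernoff's method: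
for `(a - 1) (t - a L) ≥ 0` one has `e^{-t} ≤ e^{-(a - 1) L} e^{-t / a}`, and integrating
`t^{L-1} e^{-t / a}` over `(0, ∞)` gives `(L - 1)! a^L`. Hence either tail, divided by
`Γ(L) = (L - 1)!`, is at most `(a e^{1 - a})^L`, which tends to `0` because `a < e^{a - 1}`.
-/

open Filter MeasureTheory

open Real Set
open scoped Nat Topology

lemma integral_pow_mul_exp_neg_mul_Ioi (n : ℕ) {c : ℝ} (hc : 0 < c) :
    ∫ t in Ioi 0, t ^ n * exp (-(c * t)) = n ! / c ^ (n + 1) := by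
  have key := integral_rpow_mul_exp_neg_mul_Ioi (a := n + 1) (by positivity) hc
  simp_rw [add_sub_cancel_right, rpow_natCast, Gamma_nat_eq_factorial] at key
  rw [key, ← Nat.cast_succ, rpow_natCast, one_div, inv_pow, div_eq_mul_inv, mul_comm]

lemma integrableOn_pow_mul_exp_neg_mul_Ioi (n : ℕ) {c : ℝ} (hc : 0 < c) :
    IntegrableOn (fun t ↦ t ^ n * exp (-(c * t))) (Ioi 0) :=
  .of_integral_ne_zero (by rw [integral_pow_mul_exp_neg_mul_Ioi n hc]; positivity)

lemma setIntegral_pow_mul_exp_neg_le (n : ℕ) {a x : ℝ} (ha : 0 < a) {s : Set ℝ}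
    (hs : MeasurableSet s) (hs0 : s ⊆ Ioi 0) (hsx : ∀ t ∈ s, (a - 1) * x ≤ (a - 1) * t) :
    ∫ t in s, t ^ n * exp (-t) ≤ exp (-((a - 1) / a * x)) * (n ! * a ^ (n + 1)) := by
  have hint (c : ℝ) (hc : 0 < c) : IntegrableOn (fun t ↦ t ^ n * exp (-(c * t))) s :=
    (integrableOn_pow_mul_exp_neg_mul_Ioi n hc).mono_set hs0
  have htilt (t : ℝ) (ht : t ∈ s) :
      t ^ n * exp (-t) ≤ exp (-((a - 1) / a * x)) * (t ^ n * exp (-(a⁻¹ * t))) := by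
    have hexp : -t ≤ -((a - 1) / a * x) + -(a⁻¹ * t) := by
      have := div_le_div_of_nonneg_right (hsx t ht) ha.le
      field_simp at this ⊢
      linarith
    calc t ^ n * exp (-t) ≤ t ^ n * exp (-((a - 1) / a * x) + -(a⁻¹ * t)) := by
          have ht0 : 0 < t := hs0 ht
          gcongr
      _ = _ := by rw [exp_add]; ring
  calc ∫ t in s, t ^ n * exp (-t)
      ≤ ∫ t in s, exp (-((a - 1) / a * x)) * (t ^ n * exp (-(a⁻¹ * t))) :=
        setIntegral_mono_on (by simpa using hint 1 one_pos)
          ((hint _ (inv_pos.2 ha)).const_mul _) hs htilt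
    _ ≤ ∫ t in Ioi 0, exp (-((a - 1) / a * x)) * (t ^ n * exp (-(a⁻¹ * t))) := by
        refine setIntegral_mono_set ((integrableOn_pow_mul_exp_neg_mul_Ioi n
          (inv_pos.2 ha)).const_mul _) ?_ hs0.eventuallyLE
        filter_upwards [ae_restrict_mem measurableSet_Ioi] with t ht
        exact mul_nonneg (exp_pos _).le (mul_nonneg (pow_nonneg (le_of_lt ht) _) (exp_pos _).le)
    _ = exp (-((a - 1) / a * x)) * (n ! * a ^ (n + 1)) := by
        rw [integral_const_mul, integral_pow_mul_exp_neg_mul_Ioi n (inv_pos.2 ha), inv_pow,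
          div_inv_eq_mul]

lemma setIntegral_pow_mul_exp_neg_le_pow (n : ℕ) {a : ℝ} (ha : 0 < a) {s : Set ℝ}
    (hs : MeasurableSet s) (hs0 : s ⊆ Ioi 0)
    (hsx : ∀ t ∈ s, (a - 1) * (a * (n + 1)) ≤ (a - 1) * t) :
    ∫ t in s, t ^ n * exp (-t) ≤ (a * exp (1 - a)) ^ (n + 1) * n ! := by
  refine (setIntegral_pow_mul_exp_neg_le n ha hs hs0 hsx).trans_eq ?_
  rw [mul_pow, ← exp_nat_mul]
  field_simp
  push_cast
  ring_nf

lemma uGamma_succ_zero_s10 (n : ℕ) : uGamma (n + 1) 0 = n ! := by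
  simpa [uGamma] using integral_pow_mul_exp_neg_mul_Ioi n one_pos

lemma uGamma_nonneg (L : ℕ) {x : ℝ} (hx : 0 ≤ x) : 0 ≤ uGamma L x :=
  setIntegral_nonneg measurableSet_Ioi fun t ht ↦ by
    have : 0 < t := hx.trans_lt ht
    positivity

lemma uGamma_zero_sub_uGamma (L : ℕ) {x : ℝ} (hx : 0 ≤ x) :
    uGamma L 0 - uGamma L x = ∫ t in Ioc 0 x, t ^ (L - 1) * exp (-t) := by
  have hint := integrableOn_pow_mul_exp_neg_mul_Ioi (L - 1) one_pos
  simp only [one_mul] at hint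
  rw [sub_eq_iff_eq_add, uGamma, uGamma, ← Ioc_union_Ioi_eq_Ioi hx]
  exact setIntegral_union (Ioc_disjoint_Ioi le_rfl) measurableSet_Ioi
    (hint.mono_set Ioc_subset_Ioi_self) (hint.mono_set (Ioi_subset_Ioi hx))

lemma uGamma_le_uGamma_zero (L : ℕ) {x : ℝ} (hx : 0 ≤ x) : uGamma L x ≤ uGamma L 0 := by
  rw [← sub_nonneg, uGamma_zero_sub_uGamma L hx]
  exact setIntegral_nonneg measurableSet_Ioc fun t ht ↦
    mul_nonneg (pow_nonneg ht.1.le _) (exp_pos _).le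

lemma uGamma_succ_le (n : ℕ) {a : ℝ} (ha : 1 ≤ a) :
    uGamma (n + 1) (a * (n + 1)) ≤ (a * exp (1 - a)) ^ (n + 1) * n ! := by
  have ha0 : 0 < a := by linarith
  rw [uGamma, Nat.add_sub_cancel]
  exact setIntegral_pow_mul_exp_neg_le_pow n ha0 measurableSet_Ioi (Ioi_subset_Ioi (by positivity))
    fun t ht ↦ mul_le_mul_of_nonneg_left (le_of_lt ht) (by linarith)

lemma uGamma_succ_zero_sub_le (n : ℕ) {a : ℝ} (ha0 : 0 < a) (ha1 : a ≤ 1) :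
    uGamma (n + 1) 0 - uGamma (n + 1) (a * (n + 1)) ≤ (a * exp (1 - a)) ^ (n + 1) * n ! := by
  rw [uGamma_zero_sub_uGamma _ (by positivity), Nat.add_sub_cancel]
  exact setIntegral_pow_mul_exp_neg_le_pow n ha0 measurableSet_Ioc Ioc_subset_Ioi_self
    fun t ht ↦ mul_le_mul_of_nonpos_left ht.2 (by linarith)

lemma mul_exp_one_sub_lt_one {a : ℝ} (ha : a ≠ 1) : a * exp (1 - a) < 1 := by
  have h : a < exp (a - 1) := by simpa using add_one_lt_exp (sub_ne_zero.2 ha)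
  calc a * exp (1 - a) < exp (a - 1) * exp (1 - a) := by gcongr
    _ = 1 := by rw [← exp_add]; simp

lemma tendsto_pow_mul_exp_one_sub {a : ℝ} (ha0 : 0 < a) (ha1 : a ≠ 1) :
    Tendsto (fun n : ℕ ↦ (a * exp (1 - a)) ^ (n + 1)) atTop (𝓝 0) :=
  (tendsto_pow_atTop_nhds_zero_of_lt_one (by positivity) (mul_exp_one_sub_lt_one ha1)).comp
    (tendsto_add_atTop_nat 1)

lemma tendsto_one_sub_uGamma_mul_div_of_lt_one {a : ℝ} (ha0 : 0 < a) (ha1 : a < 1) :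
    Tendsto (fun L : ℕ ↦ 1 - uGamma L (a * L) / uGamma L 0) atTop (𝓝 0) := by
  rw [← tendsto_add_atTop_iff_nat 1]
  refine squeeze_zero (fun n ↦ ?_) (fun n ↦ ?_) (tendsto_pow_mul_exp_one_sub ha0 ha1.ne)
  all_goals simp only [Nat.cast_succ]
  · exact sub_nonneg.2 <| div_le_one_of_le₀ (uGamma_le_uGamma_zero _ (by positivity))
      (uGamma_nonneg _ le_rfl)
  · rw [uGamma_succ_zero_s10, one_sub_div (by positivity), div_le_iff₀ (by positivity)]
    simpa only [uGamma_succ_zero_s10] using uGamma_succ_zero_sub_le n ha0 ha1.le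

lemma tendsto_uGamma_mul_div_of_one_lt {a : ℝ} (ha : 1 < a) :
    Tendsto (fun L : ℕ ↦ uGamma L (a * L) / uGamma L 0) atTop (𝓝 0) := by
  rw [← tendsto_add_atTop_iff_nat 1]
  refine squeeze_zero (fun n ↦ ?_) (fun n ↦ ?_)
    (tendsto_pow_mul_exp_one_sub (by linarith) ha.ne')
  all_goals simp only [Nat.cast_succ]
  · exact div_nonneg (uGamma_nonneg _ (by positivity)) (uGamma_nonneg _ le_rfl)
  · rw [uGamma_succ_zero_s10, div_le_iff₀ (by positivity)]
    exact uGamma_succ_le n ha.le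

theorem sinr_cdf_limit_antenna_scaling_general (q : ℝ) (hq : 0 < q)
    (ψc : ℝ → ℝ)
    (hpos : ∀ γ > 0, 0 < ψc γ) :
    ∀ γ > 0,
      (ψc γ < 1 / q →
        Tendsto (fun L : ℕ => 1 - uGamma L (q * L * ψc γ) / uGamma L 0) atTop (nhds 0)) ∧
      (1 / q < ψc γ →
        Tendsto (fun L : ℕ => 1 - uGamma L (q * L * ψc γ) / uGamma L 0) atTop (nhds 1)) := by
  intro γ hγ
  have hreorder (L : ℕ) : q * L * ψc γ = q * ψc γ * L := by ring
  simp only [hreorder, lt_div_iff₀ hq, div_lt_iff₀ hq, mul_comm (ψc γ) q]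
  refine ⟨tendsto_one_sub_uGamma_mul_div_of_lt_one (mul_pos hq (hpos γ hγ)), fun h ↦ ?_⟩
  simpa using (tendsto_uGamma_mul_div_of_one_lt h).const_sub 1

theorem sinr_cdf_limit_antenna_scaling (q : ℝ) (hq : 0 < q)
    (ψc : ℝ → ℝ)
    (hcont : ContinuousOn ψc (Set.Ioi 0))
    (hmono : StrictMonoOn ψc (Set.Ioi 0))
    (hpos : ∀ γ > 0, 0 < ψc γ)
    (h0 : Tendsto ψc (nhdsWithin 0 (Set.Ioi 0)) (nhds 0))
    (htop : Tendsto ψc atTop atTop) :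
    ∀ γ > 0,
      (ψc γ < 1 / q →
        Tendsto (fun L : ℕ => 1 - uGamma L (q * L * ψc γ) / uGamma L 0) atTop (nhds 0)) ∧
      (1 / q < ψc γ →
        Tendsto (fun L : ℕ => 1 - uGamma L (q * L * ψc γ) / uGamma L 0) atTop (nhds 1)) :=
  sinr_cdf_limit_antenna_scaling_general q hq ψc hpos
end
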